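/- arXiv:2508.05965 — 3 statements merged into one kernel-verified Lean document; each statement's English description precedes it below -/
import Mathlib

section
/- For |q| < 1, |x| < 1, and any complex number a, the basic hypergeometric series ${}_2\phi_1(a, -a; -q; q, x) = \sum_{i=0}^\infty \frac{(a;q)_i(-a;q)_i}{(q;q)_i(-q;q)_i} x^i$ equals $(a^2 x; q^2)_\infty / (x; q^2)_\infty$. -/
open Finset

noncomputable def qPoch (a q : ℂ) (n : ℕ) : ℂ := ∏ j ∈ Finset.range n, (1 - a * q ^ j)

noncomputable def qPochInf (a q : ℂ) : ℂ := ∏' j : ℕ, (1 - a * q ^ j)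

noncomputable def phi (a b c q x : ℂ) : ℂ :=
  ∑' i : ℕ, qPoch a q i * qPoch b q i / (qPoch q q i * qPoch c q i) * x ^ i

/-!
Since `(a;q)_n (-a;q)_n = (a²;q²)_n`, the series is the q-binomial series
`F x = ∑ (b;p)_n / (p;p)_n xⁿ` with `b = a²`, `p = q²`. Comparing coefficients gives
`(1 - x) F x = (1 - b x) F (p x)`; iterating, `F x (x;p)_N = (b x;p)_N F (pᴺ x)`. The coefficients
converge to `(b;p)_∞ / (p;p)_∞`, so they are bounded, and dominated convergence gives
`F (pᴺ x) → F 0 = 1`, whence `F x = (b x;p)_∞ / (x;p)_∞`.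
-/

open Filter Topology

lemma qPoch_succ (a q : ℂ) (n : ℕ) : qPoch a q (n + 1) = qPoch a q n * (1 - a * q ^ n) :=
  prod_range_succ _ _

lemma qPoch_mul_qPoch_neg (a q : ℂ) (n : ℕ) :
    qPoch a q n * qPoch (-a) q n = qPoch (a ^ 2) (q ^ 2) n := by
  rw [qPoch, qPoch, qPoch, ← prod_mul_distrib]
  exact prod_congr rfl fun j _ => by ring

lemma norm_pow_mul_le {p : ℂ} (hp : ‖p‖ ≤ 1) (n : ℕ) (x : ℂ) : ‖p ^ n * x‖ ≤ ‖x‖ := by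
  rw [norm_mul, norm_pow]
  exact mul_le_of_le_one_left (norm_nonneg x) (pow_le_one₀ (norm_nonneg p) hp)

lemma one_sub_mul_pow_ne_zero {c p : ℂ} (hc : ‖c‖ < 1) (hp : ‖p‖ ≤ 1) (j : ℕ) :
    1 - c * p ^ j ≠ 0 := by
  intro h
  have hlt : ‖p ^ j * c‖ < 1 := (norm_pow_mul_le hp j c).trans_lt hc
  rw [mul_comm, ← sub_eq_zero.mp h, norm_one] at hlt
  exact lt_irrefl _ hlt

lemma qPoch_self_ne_zero {p : ℂ} (hp : ‖p‖ < 1) (n : ℕ) : qPoch p p n ≠ 0 :=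
  prod_ne_zero_iff.mpr fun j _ => one_sub_mul_pow_ne_zero hp hp.le j

lemma summable_norm_neg_mul_pow (c : ℂ) {p : ℂ} (hp : ‖p‖ < 1) :
    Summable fun j : ℕ => ‖-(c * p ^ j)‖ := by
  simpa [norm_mul, norm_pow] using
    (summable_geometric_of_lt_one (norm_nonneg p) hp).mul_left ‖c‖

lemma tendsto_qPoch (c : ℂ) {p : ℂ} (hp : ‖p‖ < 1) :
    Tendsto (qPoch c p) atTop (𝓝 (qPochInf c p)) := by
  have h := (multipliable_one_add_of_summable (summable_norm_neg_mul_pow c hp)).hasProd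
  simp only [← sub_eq_add_neg] at h
  exact h.tendsto_prod_nat

lemma qPochInf_ne_zero {c p : ℂ} (hc : ‖c‖ < 1) (hp : ‖p‖ < 1) : qPochInf c p ≠ 0 := by
  simpa [qPochInf, ← sub_eq_add_neg] using tprod_one_add_ne_zero_of_summable
    (fun j => by simpa [← sub_eq_add_neg] using one_sub_mul_pow_ne_zero hc hp.le j)
    (summable_norm_neg_mul_pow c hp)

lemma summable_mul_pow_of_norm_le {f : ℕ → ℂ} {K : ℝ} (hK : ∀ n, ‖f n‖ ≤ K) {y : ℂ}
    (hy : ‖y‖ < 1) : Summable fun n => f n * y ^ n := by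
  refine .of_norm_bounded ((summable_geometric_of_lt_one (norm_nonneg y) hy).mul_left K)
    fun n => ?_
  rw [norm_mul, norm_pow]
  exact mul_le_mul_of_nonneg_right (hK n) (by positivity)

section QBinomial

variable {b p : ℂ}

noncomputable def qBinomCoeff (b p : ℂ) (n : ℕ) : ℂ := qPoch b p n / qPoch p p n

noncomputable def qBinomSeries (b p y : ℂ) : ℂ := ∑' n, qBinomCoeff b p n * y ^ n

lemma qBinomCoeff_succ_mul (hp : ‖p‖ < 1) (n : ℕ) :
    qBinomCoeff b p (n + 1) * (1 - p ^ (n + 1)) = qBinomCoeff b p n * (1 - b * p ^ n) := by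
  have hfactor : 1 - p ^ (n + 1) ≠ 0 := by
    simpa [pow_succ'] using one_sub_mul_pow_ne_zero hp hp.le n
  rw [qBinomCoeff, qBinomCoeff, qPoch_succ, qPoch_succ, ← pow_succ']
  field_simp [qPoch_self_ne_zero hp n]

lemma exists_norm_qBinomCoeff_le (hp : ‖p‖ < 1) : ∃ K, ∀ n, ‖qBinomCoeff b p n‖ ≤ K := by
  have hlim : Tendsto (qBinomCoeff b p) atTop (𝓝 (qPochInf b p / qPochInf p p)) :=
    (tendsto_qPoch b hp).div (tendsto_qPoch p hp) (qPochInf_ne_zero hp hp)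
  obtain ⟨K, hK⟩ := isBounded_iff_forall_norm_le.mp (Metric.isBounded_range_of_tendsto _ hlim)
  exact ⟨K, fun n => hK _ (Set.mem_range_self n)⟩

lemma hasSum_qBinomSeries (hp : ‖p‖ < 1) {y : ℂ} (hy : ‖y‖ < 1) :
    HasSum (fun n => qBinomCoeff b p n * y ^ n) (qBinomSeries b p y) :=
  have ⟨_, hK⟩ := exists_norm_qBinomCoeff_le (b := b) hp
  (summable_mul_pow_of_norm_le hK hy).hasSum

lemma qBinomSeries_functional_eq (hp : ‖p‖ < 1) {y : ℂ} (hy : ‖y‖ < 1) :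
    (1 - y) * qBinomSeries b p y = (1 - b * y) * qBinomSeries b p (p * y) := by
  have hpy : ‖p * y‖ < 1 := by simpa using (norm_pow_mul_le hp.le 1 y).trans_lt hy
  have hF := hasSum_qBinomSeries (b := b) hp hy
  have hFp := hasSum_qBinomSeries (b := b) hp hpy
  have hshift := (hasSum_nat_add_iff' 1).mpr (hF.sub hFp)
  have hrhs := (hF.sub (hFp.mul_left b)).mul_left y
  have heq : qBinomSeries b p y - qBinomSeries b p (p * y) =
      y * (qBinomSeries b p y - b * qBinomSeries b p (p * y)) := by
    have h := hshift.unique (hrhs.congr_fun fun n => by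
      linear_combination y ^ (n + 1) * qBinomCoeff_succ_mul (b := b) hp n)
    simpa using h
  linear_combination heq

lemma qBinomSeries_mul_qPoch (hp : ‖p‖ < 1) {x : ℂ} (hx : ‖x‖ < 1) (N : ℕ) :
    qBinomSeries b p x * qPoch x p N = qPoch (b * x) p N * qBinomSeries b p (p ^ N * x) := by
  induction N with
  | zero => simp [qPoch]
  | succ N ih =>
    have hfun := qBinomSeries_functional_eq (b := b) hp ((norm_pow_mul_le hp.le N x).trans_lt hx)
    rw [show p * (p ^ N * x) = p ^ (N + 1) * x by ring] at hfun
    rw [qPoch_succ, qPoch_succ]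
    linear_combination (1 - x * p ^ N) * ih + qPoch (b * x) p N * hfun

lemma tendsto_qBinomSeries_pow_mul (hp : ‖p‖ < 1) {x : ℂ} (hx : ‖x‖ < 1) :
    Tendsto (fun N => qBinomSeries b p (p ^ N * x)) atTop (𝓝 1) := by
  obtain ⟨K, hK⟩ := exists_norm_qBinomCoeff_le (b := b) hp
  have hlim := tendsto_tsum_of_dominated_convergence
    (f := fun N n => qBinomCoeff b p n * (p ^ N * x) ^ n)
    (g := fun n => qBinomCoeff b p n * (0 * x) ^ n)
    ((summable_geometric_of_lt_one (norm_nonneg x) hx).mul_left K)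
    (fun n => (((tendsto_pow_atTop_nhds_zero_of_norm_lt_one hp).mul_const x).pow n).const_mul _)
    (.of_forall fun N n => ?_)
  · have hsum_zero : ∑' n, qBinomCoeff b p n * (0 * x) ^ n = 1 := by
      rw [tsum_eq_single 0 fun n hn => by simp [hn]]
      simp [qBinomCoeff, qPoch]
    rwa [hsum_zero] at hlim
  · rw [norm_mul, norm_pow]
    exact mul_le_mul (hK n) (pow_le_pow_left₀ (norm_nonneg _) (norm_pow_mul_le hp.le N x) n)
      (by positivity) ((norm_nonneg _).trans (hK 0))

theorem qBinomSeries_eq (hp : ‖p‖ < 1) {x : ℂ} (hx : ‖x‖ < 1) :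
    qBinomSeries b p x = qPochInf (b * x) p / qPochInf x p := by
  have hlhs := (tendsto_qPoch x hp).const_mul (qBinomSeries b p x)
  have hrhs := (tendsto_qPoch (b * x) hp).mul (tendsto_qBinomSeries_pow_mul (b := b) hp hx)
  rw [mul_one] at hrhs
  rw [eq_div_iff (qPochInf_ne_zero hx hp)]
  exact tendsto_nhds_unique (hlhs.congr (qBinomSeries_mul_qPoch hp hx)) hrhs

end QBinomial

theorem stmt_0 (q a x : ℂ) (hq : ‖q‖ < 1) (hx : ‖x‖ < 1) :
    phi a (-a) (-q) q x = qPochInf (a ^ 2 * x) (q ^ 2) / qPochInf x (q ^ 2) := by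
  have hq2 : ‖q ^ 2‖ < 1 := by
    rw [norm_pow]
    exact pow_lt_one₀ (norm_nonneg q) hq two_ne_zero
  rw [← qBinomSeries_eq hq2 hx, phi, qBinomSeries]
  refine tsum_congr fun i => ?_
  rw [qPoch_mul_qPoch_neg, qPoch_mul_qPoch_neg, qBinomCoeff]
end

section
/- For |q| < 1, |x| < 1, any complex a, and every positive integer N: ${}_2\phi_1(a, -a; -q; q, x) = \frac{(a^2 x; q^2)_N}{(x; q^2)_N} \cdot {}_2\phi_1(a, -a; -q; q, x q^{2N})$. -/
open Finset

/-!
Since `(a; q)ᵢ (-a; q)ᵢ = (a²; q²)ᵢ`, the series `₂φ₁(a, -a; -q; q, y)` is the `q`-binomial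
series `S(y) = ∑ (A; Q)ᵢ / (Q; Q)ᵢ yⁱ` with `A = a²`, `Q = q²`. Comparing coefficients with
`(Q; Q)ᵢ₊₁ = (Q; Q)ᵢ (1 - Qⁱ⁺¹)` and `(A; Q)ᵢ₊₁ = (A; Q)ᵢ (1 - AQⁱ)` gives the functional equation
`(1 - y) S(y) = (1 - Ay) S(Qy)`, and iterating it `N` times gives
`(y; Q)_N S(y) = (Ay; Q)_N S(Q^N y)`.
-/

open Filter Topology

lemma norm_mul_pow_lt_one {x Q : ℂ} (hx : ‖x‖ < 1) (hQ : ‖Q‖ ≤ 1) (n : ℕ) :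
    ‖x * Q ^ n‖ < 1 := by
  rw [norm_mul, norm_pow]
  exact (mul_le_of_le_one_right (norm_nonneg x) (pow_le_one₀ (norm_nonneg Q) hQ)).trans_lt hx

lemma one_sub_ne_zero_of_norm_lt_one {z : ℂ} (hz : ‖z‖ < 1) : 1 - z ≠ 0 := by
  rw [sub_ne_zero]
  rintro rfl
  simp at hz

lemma qPoch_ne_zero {x Q : ℂ} (hx : ‖x‖ < 1) (hQ : ‖Q‖ ≤ 1) (n : ℕ) : qPoch x Q n ≠ 0 :=
  prod_ne_zero_iff.mpr fun j _ => one_sub_ne_zero_of_norm_lt_one (norm_mul_pow_lt_one hx hQ j)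

noncomputable def qBinomialCoeff (A Q : ℂ) (i : ℕ) : ℂ := qPoch A Q i / qPoch Q Q i

noncomputable def qBinomialSeries (A Q y : ℂ) : ℂ := ∑' i : ℕ, qBinomialCoeff A Q i * y ^ i

lemma phi_eq_qBinomialSeries (a q y : ℂ) :
    phi a (-a) (-q) q y = qBinomialSeries (a ^ 2) (q ^ 2) y := by
  simp only [phi, qBinomialSeries, qBinomialCoeff, qPoch_mul_qPoch_neg]

section qBinomial

variable {A Q : ℂ} (hQ : ‖Q‖ < 1)
include hQ

lemma one_sub_pow_succ_ne_zero (i : ℕ) : 1 - Q ^ (i + 1) ≠ 0 := by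
  refine one_sub_ne_zero_of_norm_lt_one ?_
  rw [norm_pow]
  exact pow_lt_one₀ (norm_nonneg Q) hQ i.succ_ne_zero

lemma qBinomialCoeff_succ_mul (i : ℕ) :
    qBinomialCoeff A Q (i + 1) * (1 - Q ^ (i + 1)) = qBinomialCoeff A Q i * (1 - A * Q ^ i) := by
  have := qPoch_ne_zero hQ hQ.le i
  have := one_sub_pow_succ_ne_zero hQ i
  rw [qBinomialCoeff, qBinomialCoeff, qPoch_succ, qPoch_succ, ← pow_succ']
  field_simp

lemma qBinomialCoeff_succ (i : ℕ) :
    qBinomialCoeff A Q (i + 1) =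
      qBinomialCoeff A Q i * ((1 - A * Q ^ i) / (1 - Q ^ (i + 1))) := by
  rw [mul_div_assoc', eq_div_iff (one_sub_pow_succ_ne_zero hQ i), qBinomialCoeff_succ_mul hQ]

lemma summable_qBinomialCoeff_mul_pow {y : ℂ} (hy : ‖y‖ < 1) :
    Summable fun i => qBinomialCoeff A Q i * y ^ i := by
  obtain ⟨r, hyr, hr1⟩ := exists_between hy
  refine summable_of_ratio_norm_eventually_le hr1 ?_
  have hratio : Tendsto (fun i : ℕ => ‖y * ((1 - A * Q ^ i) / (1 - Q ^ (i + 1)))‖)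
      atTop (𝓝 ‖y‖) := by
    have hQi := tendsto_pow_atTop_nhds_zero_of_norm_lt_one hQ
    have hQi1 := hQi.comp (tendsto_add_atTop_nat 1)
    simpa using (((tendsto_const_nhds (x := (1 : ℂ)).sub (hQi.const_mul A)).div
      (tendsto_const_nhds.sub hQi1) (by simp : (1 : ℂ) - 0 ≠ 0)).const_mul y).norm
  filter_upwards [hratio.eventually_lt_const hyr] with i hi
  have hterm : qBinomialCoeff A Q (i + 1) * y ^ (i + 1) =
      y * ((1 - A * Q ^ i) / (1 - Q ^ (i + 1))) * (qBinomialCoeff A Q i * y ^ i) := by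
    rw [qBinomialCoeff_succ hQ]
    ring
  rw [hterm, norm_mul]
  exact mul_le_mul_of_nonneg_right hi.le (norm_nonneg _)

lemma one_sub_mul_qBinomialSeries {y : ℂ} (hy : ‖y‖ < 1) :
    (1 - y) * qBinomialSeries A Q y = (1 - A * y) * qBinomialSeries A Q (y * Q) := by
  have hf := summable_qBinomialCoeff_mul_pow (A := A) hQ hy
  have hg := summable_qBinomialCoeff_mul_pow (A := A) hQ (norm_mul_pow_lt_one hy hQ.le 1)
  simp only [pow_one] at hg
  have hdiff : Summable fun i => qBinomialCoeff A Q i * (1 - Q ^ i) * y ^ i :=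
    (hf.sub hg).congr fun i => by ring
  have key : qBinomialSeries A Q y - qBinomialSeries A Q (y * Q) =
      y * (qBinomialSeries A Q y - A * qBinomialSeries A Q (y * Q)) :=
    calc qBinomialSeries A Q y - qBinomialSeries A Q (y * Q)
        = ∑' i, qBinomialCoeff A Q i * (1 - Q ^ i) * y ^ i := by
          rw [qBinomialSeries, qBinomialSeries, ← hf.tsum_sub hg]
          exact tsum_congr fun i => by ring
      _ = ∑' i, qBinomialCoeff A Q (i + 1) * (1 - Q ^ (i + 1)) * y ^ (i + 1) := by
          rw [hdiff.tsum_eq_zero_add]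
          simp
      _ = ∑' i, y * (qBinomialCoeff A Q i * y ^ i - A * (qBinomialCoeff A Q i * (y * Q) ^ i)) :=
          tsum_congr fun i => by rw [qBinomialCoeff_succ_mul hQ]; ring
      _ = y * (qBinomialSeries A Q y - A * qBinomialSeries A Q (y * Q)) := by
          rw [tsum_mul_left, hf.tsum_sub (hg.mul_left A), tsum_mul_left]
          rfl
  linear_combination key

theorem qPoch_mul_qBinomialSeries {x : ℂ} (hx : ‖x‖ < 1) (N : ℕ) :
    qPoch x Q N * qBinomialSeries A Q x =
      qPoch (A * x) Q N * qBinomialSeries A Q (x * Q ^ N) := by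
  induction N with
  | zero => simp [qPoch]
  | succ n ih =>
    have hstep := one_sub_mul_qBinomialSeries (A := A) hQ (norm_mul_pow_lt_one hx hQ.le n)
    rw [qPoch_succ, qPoch_succ, pow_succ, ← mul_assoc]
    linear_combination (1 - x * Q ^ n) * ih + qPoch (A * x) Q n * hstep

end qBinomial

theorem stmt_11_general (q a x : ℂ) (hq : ‖q‖ < 1) (hx : ‖x‖ < 1) (N : ℕ) :
    phi a (-a) (-q) q x =
      qPoch (a ^ 2 * x) (q ^ 2) N / qPoch x (q ^ 2) N *
        phi a (-a) (-q) q (x * q ^ (2 * N)) := by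
  have hq2 : ‖q ^ 2‖ < 1 := by
    rw [norm_pow]
    exact pow_lt_one₀ (norm_nonneg q) hq two_ne_zero
  rw [phi_eq_qBinomialSeries, phi_eq_qBinomialSeries, pow_mul, div_mul_eq_mul_div,
    eq_div_iff (qPoch_ne_zero hx hq2.le N), mul_comm]
  exact qPoch_mul_qBinomialSeries hq2 hx N

theorem stmt_11 (q a x : ℂ) (hq : ‖q‖ < 1) (hx : ‖x‖ < 1) (N : ℕ) (hN : 0 < N)
    (hxN : qPoch x (q ^ 2) N ≠ 0) :
    phi a (-a) (-q) q x =
      qPoch (a ^ 2 * x) (q ^ 2) N / qPoch x (q ^ 2) N *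
        phi a (-a) (-q) q (x * q ^ (2 * N)) :=
  stmt_11_general q a x hq hx N
end

section
/- For |q| < 1, |c/(ab)| < 1, c not of the form $q^{-j}$ for nonnegative integers j, and every positive integer N: ${}_2\phi_1(a, b; c; q, c/(ab)) = \frac{(c/a; q)_N}{(c; q)_N} \cdot {}_2\phi_1(a, b q^N; c q^N; q, c/(ab))$. -/
open Finset

/-! At `x = c / (a b)` the series satisfies the contiguous relation
`φ(a, b; c) = (1 - b x) / (1 - c) · φ(a, b q; c q)`, and `1 - b x = 1 - c / a`, so iterating it
`N` times produces the ratio of `q`-Pochhammer symbols. The relation holds because, with `t` and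
`u` the terms of the two series, the partial sums of `(1 - b x) u_i - (1 - c) t_i` telescope to
`-b x (1 - a qⁿ) u_n`, which tends to `0`. Both series converge by the ratio test: the ratio of
consecutive terms tends to `x`. -/

namespace QHypergeometric

open Filter Topology

lemma qPoch_zero (e q : ℂ) : qPoch e q 0 = 1 := Finset.prod_range_zero _

lemma qPoch_succ (e q : ℂ) (n : ℕ) : qPoch e q (n + 1) = qPoch e q n * (1 - e * q ^ n) :=
  Finset.prod_range_succ _ _

lemma qPoch_succ' (e q : ℂ) (n : ℕ) : qPoch e q (n + 1) = (1 - e) * qPoch (e * q) q n := by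
  simp only [qPoch, Finset.prod_range_succ' _ n, pow_succ', pow_zero, mul_one, mul_assoc, mul_comm]

lemma qPoch_ne_zero {e q : ℂ} (h : ∀ j : ℕ, e * q ^ j ≠ 1) (n : ℕ) : qPoch e q n ≠ 0 :=
  Finset.prod_ne_zero_iff.mpr fun j _ => sub_ne_zero.mpr (h j).symm

lemma mul_pow_ne_one_of_norm_lt_one {q : ℂ} (hq : ‖q‖ < 1) (j : ℕ) : q * q ^ j ≠ 1 := by
  intro h
  have := pow_lt_one₀ (norm_nonneg q) hq j.succ_ne_zero
  rw [← norm_pow, pow_succ', h, norm_one] at this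
  exact lt_irrefl _ this

noncomputable def phiTerm (a b c q x : ℂ) (i : ℕ) : ℂ :=
  qPoch a q i * qPoch b q i / (qPoch q q i * qPoch c q i) * x ^ i

lemma phi_eq_tsum_phiTerm (a b c q x : ℂ) : phi a b c q x = ∑' i, phiTerm a b c q x i := rfl

lemma phiTerm_zero (a b c q x : ℂ) : phiTerm a b c q x 0 = 1 := by
  simp [phiTerm, qPoch_zero]

lemma phiTerm_succ (a b c q x : ℂ) (n : ℕ) :
    phiTerm a b c q x (n + 1) = phiTerm a b c q x n *
      ((1 - a * q ^ n) * (1 - b * q ^ n) / ((1 - q * q ^ n) * (1 - c * q ^ n)) * x) := by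
  simp only [phiTerm, qPoch_succ, pow_succ]
  rw [mul_mul_mul_comm, mul_mul_mul_comm (qPoch q q n), ← div_mul_div_comm]
  ring

lemma summable_phiTerm (a b c : ℂ) {q x : ℂ} (hq : ‖q‖ < 1) (hx : ‖x‖ < 1) :
    Summable (phiTerm a b c q x) := by
  obtain ⟨r, hxr, hr⟩ := exists_between hx
  have hfactor (e : ℂ) : Tendsto (fun n : ℕ => 1 - e * q ^ n) atTop (𝓝 1) := by
    simpa using tendsto_const_nhds.sub
      ((tendsto_pow_atTop_nhds_zero_of_norm_lt_one hq).const_mul e)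
  have hratio : Tendsto (fun n : ℕ =>
      (1 - a * q ^ n) * (1 - b * q ^ n) / ((1 - q * q ^ n) * (1 - c * q ^ n)) * x)
      atTop (𝓝 x) := by
    simpa using (((hfactor a).mul (hfactor b)).div ((hfactor q).mul (hfactor c))
      (by norm_num)).mul_const x
  have hsmall : ∀ᶠ n in atTop, ‖(1 - a * q ^ n) * (1 - b * q ^ n) /
      ((1 - q * q ^ n) * (1 - c * q ^ n)) * x‖ ≤ r :=
    hratio.norm.eventually (eventually_le_nhds hxr)
  refine summable_of_ratio_norm_eventually_le hr (hsmall.mono fun n hn => ?_)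
  rw [phiTerm_succ, norm_mul, mul_comm r]
  exact mul_le_mul_of_nonneg_left hn (norm_nonneg _)

lemma phiTerm_contiguous_step {a b c q x : ℂ} (hq : ‖q‖ < 1) (hcab : c = a * b * x)
    (hc : ∀ j : ℕ, c * q ^ j ≠ 1) (n : ℕ) :
    (1 - b * x) * phiTerm a (b * q) (c * q) q x (n + 1) - (1 - c) * phiTerm a b c q x (n + 1) =
      -(b * x) * ((1 - a * q ^ (n + 1)) * phiTerm a (b * q) (c * q) q x (n + 1)
        - (1 - a * q ^ n) * phiTerm a (b * q) (c * q) q x n) := by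
  have hcq (j : ℕ) : c * q * q ^ j ≠ 1 := by rw [mul_assoc, ← pow_succ']; exact hc (j + 1)
  have hQ : qPoch q q n ≠ 0 := qPoch_ne_zero (mul_pow_ne_one_of_norm_lt_one hq) n
  have hC : qPoch (c * q) q n ≠ 0 := qPoch_ne_zero hcq n
  -- `hq1` and `hc1` are oriented as `field_simp` normalizes the denominators
  have hq1 : 1 - q ^ n * q ≠ 0 := by
    rw [mul_comm]; exact sub_ne_zero.mpr (mul_pow_ne_one_of_norm_lt_one hq n).symm
  have hc1 : 1 - q ^ n * q * c ≠ 0 := by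
    rw [show q ^ n * q * c = c * q * q ^ n by ring]; exact sub_ne_zero.mpr (hcq n).symm
  have hc0 : 1 - c ≠ 0 := sub_ne_zero.mpr (by simpa using (hc 0).symm)
  rw [phiTerm_succ]
  simp only [phiTerm]
  rw [qPoch_succ a q n, qPoch_succ q q n, qPoch_succ' b q n, qPoch_succ' c q n, pow_succ x,
    pow_succ q]
  generalize qPoch a q n = A, qPoch (b * q) q n = B, qPoch q q n = Q, qPoch (c * q) q n = C,
    q ^ n = r, x ^ n = P at *
  field_simp
  subst hcab
  ring

lemma sum_range_succ_phiTerm_contiguous {a b c q x : ℂ} (hq : ‖q‖ < 1) (hcab : c = a * b * x)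
    (hc : ∀ j : ℕ, c * q ^ j ≠ 1) (n : ℕ) :
    ∑ i ∈ range (n + 1),
        ((1 - b * x) * phiTerm a (b * q) (c * q) q x i - (1 - c) * phiTerm a b c q x i) =
      -(b * x) * ((1 - a * q ^ n) * phiTerm a (b * q) (c * q) q x n) := by
  induction n with
  | zero =>
    rw [zero_add, sum_range_one, phiTerm_zero, phiTerm_zero, pow_zero, hcab]
    ring
  | succ n ih =>
    rw [sum_range_succ, ih, phiTerm_contiguous_step hq hcab hc n]
    ring

theorem phi_contiguous {a b c q x : ℂ} (hq : ‖q‖ < 1) (hx : ‖x‖ < 1) (hcab : c = a * b * x)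
    (hc : ∀ j : ℕ, c * q ^ j ≠ 1) :
    phi a b c q x = (1 - b * x) / (1 - c) * phi a (b * q) (c * q) q x := by
  have hc0 : 1 - c ≠ 0 := sub_ne_zero.mpr (by simpa using (hc 0).symm)
  have hu := summable_phiTerm a (b * q) (c * q) hq hx
  have ht := summable_phiTerm a b c hq hx
  have hsum := (hu.hasSum.mul_left (1 - b * x)).sub (ht.hasSum.mul_left (1 - c))
  have hpartial : Tendsto (fun n => ∑ i ∈ range (n + 1),
      ((1 - b * x) * phiTerm a (b * q) (c * q) q x i - (1 - c) * phiTerm a b c q x i))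
      atTop (𝓝 0) := by
    simp_rw [sum_range_succ_phiTerm_contiguous hq hcab hc]
    simpa using ((tendsto_const_nhds.sub ((tendsto_pow_atTop_nhds_zero_of_norm_lt_one hq).const_mul
      a)).mul hu.tendsto_atTop_zero).const_mul (-(b * x))
  have hzero := tendsto_nhds_unique (hsum.tendsto_sum_nat.comp (tendsto_add_atTop_nat 1)) hpartial
  rw [phi_eq_tsum_phiTerm, phi_eq_tsum_phiTerm, div_mul_eq_mul_div, eq_div_iff hc0]
  linear_combination -hzero

theorem phi_eq_qPoch_div_qPoch_mul_phi {a b c q x : ℂ} (hq : ‖q‖ < 1) (hx : ‖x‖ < 1)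
    (hcab : c = a * b * x) (hc : ∀ j : ℕ, c * q ^ j ≠ 1) (n : ℕ) :
    phi a b c q x = qPoch (b * x) q n / qPoch c q n * phi a (b * q ^ n) (c * q ^ n) q x := by
  induction n with
  | zero => simp [qPoch_zero]
  | succ n ih =>
    have hcab' : c * q ^ n = a * (b * q ^ n) * x := by rw [hcab]; ring
    have hc' (j : ℕ) : c * q ^ n * q ^ j ≠ 1 := by rw [mul_assoc, ← pow_add]; exact hc _
    rw [ih, phi_contiguous hq hx hcab' hc', qPoch_succ, qPoch_succ, pow_succ, ← mul_assoc b,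
      ← mul_assoc c, ← div_mul_div_comm]
    ring

end QHypergeometric

open QHypergeometric in
theorem stmt_12_general (q a b c : ℂ) (hq : ‖q‖ < 1) (ha : a ≠ 0) (hb : b ≠ 0)
    (hx : ‖c / (a * b)‖ < 1) (hc : ∀ j : ℕ, c * q ^ j ≠ 1) (N : ℕ) :
    phi a b c q (c / (a * b)) =
      qPoch (c / a) q N / qPoch c q N * phi a (b * q ^ N) (c * q ^ N) q (c / (a * b)) := by
  have hcab : c = a * b * (c / (a * b)) := by field_simp
  have hbx : b * (c / (a * b)) = c / a := by field_simp
  rw [phi_eq_qPoch_div_qPoch_mul_phi hq hx hcab hc N, hbx]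

theorem stmt_12 (q a b c : ℂ) (hq : ‖q‖ < 1) (ha : a ≠ 0) (hb : b ≠ 0)
    (hx : ‖c / (a * b)‖ < 1) (hc : ∀ j : ℕ, c * q ^ j ≠ 1) (N : ℕ) (hN : 0 < N) :
    phi a b c q (c / (a * b)) =
      qPoch (c / a) q N / qPoch c q N * phi a (b * q ^ N) (c * q ^ N) q (c / (a * b)) :=
  stmt_12_general q a b c hq ha hb hx hc N
end
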